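/- With Ω = B(0,ζ), T = ζ and α(x,t) = (γ+|x|)(γ+t) as above, the function f(x,t) = (|x| + √t)^{α(x,t)} belongs to the variable Hölder space C^{α(·)}(Ω̄_T): there is C with |f(x,t) - f(y,s)| ≤ C d((x,t),(y,s))^{α(x,t)} for all (x,t), (y,s) ∈ Ω_T. -/

import Mathlib

/-!
Write `u, v` for the bases `|x| + √t`, `|y| + √s`, `a, b` for the exponents `α(x,t)`, `α(y,s)`
and `d` for the parabolic distance. Split `u ^ a - v ^ b = (u ^ a - v ^ a) + (v ^ a - v ^ b)`.
The first term is at most `|u - v| ^ a ≤ (2d) ^ a` by subadditivity of `r ↦ r ^ a`. For the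
second, `c ↦ v ^ c` is Lipschitz on `[γ², 1]` with constant `2/γ²` uniformly in `v ∈ (0, 2]`
(the derivative `v ^ c log v` is controlled by `|w log w| < 1` for `w = v ^ γ² ≤ 1`), and
`|a - b| ≤ d + d² ≤ 3d ≤ 6 d ^ a` because `d ≤ 2` and `a ≤ 1`.
-/

open Real Set

/-- The parabolic distance on `ℝⁿ × ℝ`. -/
noncomputable def pd {n : ℕ} (P Q : (Fin n → ℝ) × ℝ) : ℝ :=
  max ‖P.1 - Q.1‖ (Real.sqrt |P.2 - Q.2|)

lemma abs_rpow_sub_rpow_le {u v p : ℝ} (hu : 0 ≤ u) (hv : 0 ≤ v) (hp : 0 ≤ p) (hp1 : p ≤ 1) :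
    |u ^ p - v ^ p| ≤ |u - v| ^ p := by
  wlog hvu : v ≤ u generalizing u v
  · rw [abs_sub_comm, abs_sub_comm u]
    exact this hv hu (le_of_not_ge hvu)
  have hsub : u ^ p ≤ v ^ p + (u - v) ^ p := by
    simpa using rpow_add_le_add_rpow hv (sub_nonneg.2 hvu) hp hp1
  rw [abs_of_nonneg (sub_nonneg.2 (rpow_le_rpow hv hvu hp)), abs_of_nonneg (sub_nonneg.2 hvu)]
  linarith

lemma abs_sqrt_sub_sqrt_le {t s : ℝ} (ht : 0 ≤ t) (hs : 0 ≤ s) :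
    |√t - √s| ≤ √|t - s| := by
  simpa only [sqrt_eq_rpow] using abs_rpow_sub_rpow_le ht hs (by norm_num) (by norm_num)

lemma le_mul_rpow_of_le {d R a : ℝ} (hd : 0 ≤ d) (hdR : d ≤ R) (hR : 1 ≤ R) (ha0 : 0 ≤ a)
    (ha1 : a ≤ 1) :
    d ≤ R * d ^ a := by
  have hsplit : d = d ^ (1 - a) * d ^ a := by
    rw [← rpow_add' hd (by norm_num), sub_add_cancel, rpow_one]
  have hR' : d ^ (1 - a) ≤ R := calc
    d ^ (1 - a) ≤ R ^ (1 - a) := rpow_le_rpow hd hdR (by linarith)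
    _ ≤ R ^ (1 : ℝ) := rpow_le_rpow_of_exponent_le hR (by linarith)
    _ = R := rpow_one R
  calc d = d ^ (1 - a) * d ^ a := hsplit
    _ ≤ R * d ^ a := mul_le_mul_of_nonneg_right hR' (rpow_nonneg hd a)

lemma abs_rpow_mul_log_le {v c m : ℝ} (hv : 0 < v) (hv2 : v ≤ 2) (hm : 0 < m) (hm1 : m ≤ 1)
    (hmc : m ≤ c) (hc1 : c ≤ 1) : |v ^ c * log v| ≤ 2 / m := by
  have h2m : 2 ≤ 2 / m := by rw [le_div_iff₀ hm]; linarith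
  rcases le_or_gt 1 v with hv1 | hv1
  · have hlog : log v ≤ 1 := by linarith [log_le_sub_one_of_pos hv]
    have hvc : v ^ c ≤ 2 := calc
      v ^ c ≤ v ^ (1 : ℝ) := rpow_le_rpow_of_exponent_le hv1 hc1
      _ ≤ 2 := by rwa [rpow_one]
    rw [abs_of_nonneg (mul_nonneg (by positivity) (log_nonneg hv1))]
    nlinarith [log_nonneg hv1, rpow_nonneg hv.le c]
  · have hvm : v ^ c * |log v| ≤ v ^ m * |log v| :=
      mul_le_mul_of_nonneg_right (rpow_le_rpow_of_exponent_ge hv hv1.le hmc) (abs_nonneg _)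
    have hkey := abs_log_mul_self_lt (v ^ m) (by positivity) (rpow_le_one hv.le hv1.le hm.le)
    rw [log_rpow hv, abs_mul, abs_mul, abs_of_pos hm,
      abs_of_pos (by positivity : 0 < v ^ m)] at hkey
    rw [abs_mul, abs_of_pos (by positivity : 0 < v ^ c), le_div_iff₀ hm]
    nlinarith [abs_nonneg (log v)]

lemma abs_rpow_sub_rpow_exponent_le {v a b m : ℝ} (hv : 0 < v) (hv2 : v ≤ 2) (hm : 0 < m)
    (hm1 : m ≤ 1) (ha : a ∈ Icc m 1) (hb : b ∈ Icc m 1) :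
    |v ^ a - v ^ b| ≤ 2 / m * |a - b| :=
  (convex_Icc m 1).norm_image_sub_le_of_norm_hasDerivWithin_le
    (fun c _ => (hasStrictDerivAt_const_rpow hv c).hasDerivAt.hasDerivWithinAt)
    (fun _ hc => abs_rpow_mul_log_le hv hv2 hm hm1 hc.1 hc.2) hb ha

lemma abs_rpow_sub_rpow_le_mul_rpow {u v a b m d : ℝ} (hu : 0 ≤ u) (hv : 0 < v) (hv2 : v ≤ 2)
    (hm : 0 < m) (hm1 : m ≤ 1) (ha : a ∈ Icc m 1) (hb : b ∈ Icc m 1) (hd : 0 ≤ d) (hd2 : d ≤ 2)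
    (huv : |u - v| ≤ 2 * d) (hab : |a - b| ≤ 3 * d) :
    |u ^ a - v ^ b| ≤ (2 + 12 / m) * d ^ a := by
  have ha0 : 0 ≤ a := hm.le.trans ha.1
  have hbase : |u ^ a - v ^ a| ≤ 2 * d ^ a := calc
    |u ^ a - v ^ a| ≤ |u - v| ^ a := abs_rpow_sub_rpow_le hu hv.le ha0 ha.2
    _ ≤ (2 * d) ^ a := rpow_le_rpow (abs_nonneg _) huv ha0
    _ = 2 ^ a * d ^ a := mul_rpow zero_le_two hd
    _ ≤ 2 * d ^ a := by
      gcongr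
      simpa using rpow_le_rpow_of_exponent_le one_le_two ha.2
  have hexp : |v ^ a - v ^ b| ≤ 12 / m * d ^ a := calc
    |v ^ a - v ^ b| ≤ 2 / m * |a - b| := abs_rpow_sub_rpow_exponent_le hv hv2 hm hm1 ha hb
    _ ≤ 2 / m * (3 * (2 * d ^ a)) := by
      gcongr
      exact hab.trans (by linarith [le_mul_rpow_of_le hd hd2 one_le_two ha0 ha.2])
    _ = 12 / m * d ^ a := by ring
  calc |u ^ a - v ^ b| ≤ |u ^ a - v ^ a| + |v ^ a - v ^ b| := abs_sub_le _ _ _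
    _ ≤ (2 + 12 / m) * d ^ a := by linarith

section ParabolicDistance

variable {n : ℕ} (P Q : (Fin n → ℝ) × ℝ)

lemma pd_nonneg : 0 ≤ pd P Q := (norm_nonneg _).trans (le_max_left _ _)

lemma abs_norm_sub_norm_le_pd : |‖P.1‖ - ‖Q.1‖| ≤ pd P Q :=
  (abs_norm_sub_norm_le _ _).trans (le_max_left _ _)

lemma abs_sub_le_pd_sq : |P.2 - Q.2| ≤ pd P Q ^ 2 := by
  have h : √|P.2 - Q.2| ≤ pd P Q := le_max_right _ _
  rwa [sqrt_le_left (pd_nonneg P Q)] at h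

lemma abs_sqrt_sub_sqrt_le_pd (hP : 0 ≤ P.2) (hQ : 0 ≤ Q.2) : |√P.2 - √Q.2| ≤ pd P Q :=
  (abs_sqrt_sub_sqrt_le hP hQ).trans (le_max_right _ _)

lemma abs_add_sqrt_sub_add_sqrt_le_pd (hP : 0 ≤ P.2) (hQ : 0 ≤ Q.2) :
    |(‖P.1‖ + √P.2) - (‖Q.1‖ + √Q.2)| ≤ 2 * pd P Q := by
  have hsplit : (‖P.1‖ + √P.2) - (‖Q.1‖ + √Q.2) = (‖P.1‖ - ‖Q.1‖) + (√P.2 - √Q.2) := by ring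
  rw [hsplit, two_mul]
  exact (abs_add_le _ _).trans
    (add_le_add (abs_norm_sub_norm_le_pd P Q) (abs_sqrt_sub_sqrt_le_pd P Q hP hQ))

end ParabolicDistance

lemma pd_le_two {n : ℕ} {P Q : (Fin n → ℝ) × ℝ} (hP : P ∈ Metric.closedBall 0 1 ×ˢ Icc 0 1)
    (hQ : Q ∈ Metric.closedBall 0 1 ×ˢ Icc 0 1) : pd P Q ≤ 2 := by
  obtain ⟨hP1, hP2, hP2'⟩ := hP
  obtain ⟨hQ1, hQ2, hQ2'⟩ := hQ
  rw [Metric.mem_closedBall, dist_zero_right] at hP1 hQ1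
  refine max_le (by linarith [norm_sub_le P.1 Q.1]) ?_
  have hts : |P.2 - Q.2| ≤ 1 := abs_sub_le_iff.2 ⟨by linarith, by linarith⟩
  linarith [sqrt_le_one.2 hts]

lemma add_mul_add_mem_Icc {γ X t : ℝ} (hγ : 0 ≤ γ) (hX : X ∈ Icc 0 (1 - γ))
    (ht : t ∈ Icc 0 (1 - γ)) : (γ + X) * (γ + t) ∈ Icc (γ ^ 2) 1 := by
  obtain ⟨hX0, hX1⟩ := hX
  obtain ⟨ht0, ht1⟩ := ht
  constructor <;> nlinarith

lemma abs_add_mul_add_sub_le {γ X Y t s : ℝ} (ht : γ + t ∈ Icc 0 1) (hY : γ + Y ∈ Icc 0 1) :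
    |(γ + X) * (γ + t) - (γ + Y) * (γ + s)| ≤ |X - Y| + |t - s| := by
  have hsplit : (γ + X) * (γ + t) - (γ + Y) * (γ + s) =
      (γ + t) * (X - Y) + (γ + Y) * (t - s) := by ring
  rw [hsplit]
  refine (abs_add_le _ _).trans (add_le_add ?_ ?_) <;>
    rw [abs_mul] <;> refine mul_le_of_le_one_left (abs_nonneg _) ?_
  · exact abs_le.2 ⟨by linarith [ht.1], ht.2⟩
  · exact abs_le.2 ⟨by linarith [hY.1], hY.2⟩

theorem example_function_in_variable_holder_general (n : ℕ) (γ ζ : ℝ)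
    (hγ1 : Real.exp (-2) < γ) (hζ2 : ζ < 1 - γ) :
    ∃ C > (0:ℝ), ∀ P ∈ (Metric.ball (0 : Fin n → ℝ) ζ) ×ˢ Ioo (0:ℝ) ζ,
      ∀ Q ∈ (Metric.ball (0 : Fin n → ℝ) ζ) ×ˢ Ioo (0:ℝ) ζ,
        |(‖P.1‖ + Real.sqrt P.2) ^ ((γ + ‖P.1‖) * (γ + P.2)) -
            (‖Q.1‖ + Real.sqrt Q.2) ^ ((γ + ‖Q.1‖) * (γ + Q.2))| ≤
          C * pd P Q ^ ((γ + ‖P.1‖) * (γ + P.2)) := by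
  have hγ : 0 < γ := (exp_pos _).trans hγ1
  refine ⟨2 + 12 / γ ^ 2, by positivity, ?_⟩
  rintro P ⟨hP1, hP2, hP2'⟩ Q ⟨hQ1, hQ2, hQ2'⟩
  rw [Metric.mem_ball, dist_zero_right] at hP1 hQ1
  have hd := pd_nonneg P Q
  have hd2 : pd P Q ≤ 2 := pd_le_two
    ⟨by rw [Metric.mem_closedBall, dist_zero_right]; linarith, by constructor <;> linarith⟩
    ⟨by rw [Metric.mem_closedBall, dist_zero_right]; linarith, by constructor <;> linarith⟩
  have hexp : |(γ + ‖P.1‖) * (γ + P.2) - (γ + ‖Q.1‖) * (γ + Q.2)| ≤ 3 * pd P Q := by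
    refine (abs_add_mul_add_sub_le ⟨by linarith, by linarith⟩
      ⟨by positivity, by linarith⟩).trans ?_
    nlinarith [abs_norm_sub_norm_le_pd P Q, abs_sub_le_pd_sq P Q]
  exact abs_rpow_sub_rpow_le_mul_rpow (by positivity) (by positivity)
    (by linarith [sqrt_le_one.2 (show Q.2 ≤ 1 by linarith)]) (by positivity)
    (pow_le_one₀ hγ.le (by linarith))
    (add_mul_add_mem_Icc hγ.le ⟨norm_nonneg _, by linarith⟩ ⟨hP2.le, by linarith⟩)
    (add_mul_add_mem_Icc hγ.le ⟨norm_nonneg _, by linarith⟩ ⟨hQ2.le, by linarith⟩)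
    hd hd2 (abs_add_sqrt_sub_add_sqrt_le_pd P Q hP2.le hQ2.le) hexp

/-- With `α(x,t) = (γ+|x|)(γ+t)` on `Ω_T = B(0,ζ) × (0,ζ)`, the function
`f(x,t) = (|x| + √t)^{α(x,t)}` belongs to the variable Hölder space `C^{α(·)}`:
there is `C` with `|f(x,t) - f(y,s)| ≤ C d((x,t),(y,s))^{α(x,t)}` on `Ω_T`. -/
theorem example_function_in_variable_holder (n : ℕ) (hn : 0 < n) (γ ζ : ℝ)
    (hγ1 : Real.exp (-2) < γ) (hγ2 : γ < 1) (hζ1 : 0 < ζ) (hζ2 : ζ < 1 - γ) :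
    ∃ C > (0:ℝ), ∀ P ∈ (Metric.ball (0 : Fin n → ℝ) ζ) ×ˢ Ioo (0:ℝ) ζ,
      ∀ Q ∈ (Metric.ball (0 : Fin n → ℝ) ζ) ×ˢ Ioo (0:ℝ) ζ,
        |(‖P.1‖ + Real.sqrt P.2) ^ ((γ + ‖P.1‖) * (γ + P.2)) -
            (‖Q.1‖ + Real.sqrt Q.2) ^ ((γ + ‖Q.1‖) * (γ + Q.2))| ≤
          C * pd P Q ^ ((γ + ‖P.1‖) * (γ + P.2)) :=
  example_function_in_variable_holder_general n γ ζ hγ1 hζ2
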